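/- arXiv:1510.01844 — 4 statements merged into one kernel-verified Lean document; each statement's English description precedes it below -/
import Mathlib

section
/- Let P_X be a pmf on 𝒳 with P_X(x)>0 for all x, let W be a channel from 𝒳 to 𝒴 such that the output pmf P_Y = W P_X satisfies P_Y(y)>0 for all y, and let f:(0,∞)→ℝ be a convex function with f(1)=0 that is strictly convex at 1 and twice differentiable at 1 with f''(1)>0. Then the contraction coefficient for χ²-divergence is obtained from the contraction coefficient for the f-divergence by driving the input divergence to zero: η_{χ²}(P_X,W) = lim_{δ→0⁺} sup{ D_f(W R || W P_X) / D_f(R || P_X) : R ∈ 𝒫_𝒳, 0 < D_f(R || P_X) ≤ δ }. (The supremum is non-increasing in δ, so the limit exists and equals the infimum over δ>0 of these suprema.) -/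
/-- A probability mass function on a finite set. -/
def IsPmf {𝒳 : Type*} [Fintype 𝒳] (P : 𝒳 → ℝ) : Prop :=
  (∀ x, 0 ≤ P x) ∧ ∑ x, P x = 1

/-- A channel (column-stochastic matrix) from `𝒳` to `𝒴`: each column `W · x` is a pmf. -/
def IsChannel {𝒳 𝒴 : Type*} [Fintype 𝒳] [Fintype 𝒴] (W : 𝒴 → 𝒳 → ℝ) : Prop :=
  (∀ y x, 0 ≤ W y x) ∧ ∀ x, ∑ y, W y x = 1

/-- Action of a channel on a pmf: `(W P)(y) = ∑ₓ W(y|x) P(x)`. -/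
def chanApply {𝒳 𝒴 : Type*} [Fintype 𝒳] (W : 𝒴 → 𝒳 → ℝ) (P : 𝒳 → ℝ) : 𝒴 → ℝ :=
  fun y => ∑ x, W y x * P x

/-- `f` is strictly convex at `1`. -/
def StrictlyConvexAtOne (f : ℝ → ℝ) : Prop :=
  ∀ x y : ℝ, 0 < x → 0 < y → x ≠ y → ∀ l : ℝ, 0 < l → l < 1 →
    l * x + (1 - l) * y = 1 → f 1 < l * f x + (1 - l) * f y

/-- `f(0) := lim_{t→0⁺} f(t)`, as an extended real. -/
noncomputable def fZero (f : ℝ → ℝ) : EReal :=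
  Filter.limsup (fun t : ℝ => ((f t : ℝ) : EReal)) (nhdsWithin 0 (Set.Ioi (0 : ℝ)))

/-- `lim_{p→0⁺} p f(1/p)`, as an extended real. -/
noncomputable def fInftySlope (f : ℝ → ℝ) : EReal :=
  Filter.limsup (fun p : ℝ => ((p * f (1 / p) : ℝ) : EReal))
    (nhdsWithin 0 (Set.Ioi (0 : ℝ)))

/-- Extended-real-valued f-divergence
`D_f(R‖P) = ∑ₓ P(x) f(R(x)/P(x))`, with the conventions `f(0) = lim_{t→0⁺} f(t)`,
`0·f(0/0) = 0`, and `0·f(r/0) = r·lim_{p→0⁺} p f(1/p)`. -/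
noncomputable def fDivE {𝒳 : Type*} [Fintype 𝒳] (f : ℝ → ℝ) (R P : 𝒳 → ℝ) : EReal :=
  ∑ x, if P x = 0 then ((R x : ℝ) : EReal) * fInftySlope f
       else if R x = 0 then ((P x : ℝ) : EReal) * fZero f
       else ((P x * f (R x / P x) : ℝ) : EReal)

/-- χ²-divergence `χ²(R‖P) = ∑ₓ (R(x) − P(x))²/P(x)`. -/
noncomputable def chiSq {𝒳 : Type*} [Fintype 𝒳] (R P : 𝒳 → ℝ) : ℝ :=
  ∑ x, (R x - P x) ^ 2 / P x

/-- Contraction coefficient for χ²-divergence. -/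
noncomputable def etaChi {𝒳 𝒴 : Type*} [Fintype 𝒳] [Fintype 𝒴]
    (P : 𝒳 → ℝ) (W : 𝒴 → 𝒳 → ℝ) : ℝ :=
  sSup {r : ℝ | ∃ R : 𝒳 → ℝ, IsPmf R ∧ 0 < chiSq R P ∧
    r = chiSq (chanApply W R) (chanApply W P) / chiSq R P}

/-!
Write `c = f''(1) / 2`. Near `t = 1`, `f t - f'(1) (t - 1)` lies within a factor `κ < 1` of
`c (t - 1)²`, so as long as every likelihood ratio `R x / P_X x` is close to `1`, `D_f(R‖P_X)`
is within a factor `κ` of `c χ²(R‖P_X)`. The output ratios are convex combinations of the input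
ones, so the same holds for `D_f(WR‖WP_X)`, and the ratio of divergences is within `κ²` of the
χ² ratio. Convexity makes `f t - f'(1) (t - 1)` bounded away from `0` when `t` is away from `1`,
so a small `D_f(R‖P_X)` forces all ratios close to `1`: this gives the upper bound. For the lower
bound, the mixtures `P_X + s (R - P_X)` tend to `P_X` as `s → 0` while keeping the χ² ratio of `R`.
-/

open Filter Topology Set

/-- Where `g` is not differentiable, `deriv g` takes the junk value `0`; near `a` this contradicts
the continuity of `g'` at `a` together with `g''(a) ≠ 0`. -/
theorem eventually_differentiableAt_of_deriv_deriv_ne_zero {g : ℝ → ℝ} {a : ℝ}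
    (hd2 : DifferentiableAt ℝ (deriv g) a) (h : deriv (deriv g) a ≠ 0) :
    ∀ᶠ x in 𝓝[≠] a, DifferentiableAt ℝ g x := by
  have hslope : ∀ᶠ x in 𝓝[≠] a, slope (deriv g) a x ≠ 0 :=
    (hasDerivAt_iff_tendsto_slope.1 hd2.hasDerivAt).eventually_ne h
  have hcont : ∀ᶠ x in 𝓝[≠] a, deriv g a ≠ 0 → deriv g x ≠ 0 := by
    by_cases ha : deriv g a = 0
    · exact .of_forall fun _ h => absurd ha h
    · exact (hd2.continuousAt.eventually_ne ha).filter_mono nhdsWithin_le_nhds |>.mono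
        fun _ hx _ => hx
  filter_upwards [hslope, hcont] with x hs hc
  by_contra hnd
  rw [deriv_zero_of_not_differentiableAt hnd] at hc
  have ha : deriv g a = 0 := by_contra fun h' => hc h' rfl
  exact hs (by rw [slope_def_field, deriv_zero_of_not_differentiableAt hnd, ha]; simp)

theorem tendsto_taylor_remainder_div_sq {g : ℝ → ℝ} {a : ℝ} (hd1 : DifferentiableAt ℝ g a)
    (hd2 : DifferentiableAt ℝ (deriv g) a) (hdiff : ∀ᶠ x in 𝓝[≠] a, DifferentiableAt ℝ g x) :
    Tendsto (fun t => (g t - g a - deriv g a * (t - a)) / (t - a) ^ 2) (𝓝[≠] a)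
      (𝓝 (deriv (deriv g) a / 2)) := by
  have hne : ∀ᶠ x in 𝓝[≠] a, x - a ≠ 0 :=
    eventually_nhdsWithin_of_forall fun x hx => sub_ne_zero.2 hx
  refine HasDerivAt.lhopital_zero_nhdsNE (f' := fun x => deriv g x - deriv g a)
    (g' := fun x => 2 * (x - a)) ?_ ?_ ?_ ?_ ?_ ?_
  · filter_upwards [hdiff] with x hx
    simpa using (hx.hasDerivAt.sub_const (g a)).fun_sub
      (((hasDerivAt_id' x).sub_const a).const_mul (deriv g a))
  · exact .of_forall fun x => by simpa using ((hasDerivAt_id' x).sub_const a).fun_pow 2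
  · filter_upwards [hne] with x hx using mul_ne_zero two_ne_zero hx
  · have h : Tendsto (fun t => g t - g a - deriv g a * (t - a)) (𝓝 a)
        (𝓝 (g a - g a - deriv g a * (a - a))) :=
      (hd1.continuousAt.tendsto.sub_const _).sub ((tendsto_id.sub_const a).const_mul _)
    simpa using h.mono_left nhdsWithin_le_nhds
  · have h : Tendsto (fun t : ℝ => (t - a) ^ 2) (𝓝 a) (𝓝 ((a - a) ^ 2)) :=
      (tendsto_id.sub_const a).pow 2
    simpa using h.mono_left nhdsWithin_le_nhds
  · refine ((hasDerivAt_iff_tendsto_slope.1 hd2.hasDerivAt).div_const 2).congr' ?_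
    filter_upwards [hne] with x hx
    rw [slope_def_field, div_div, mul_comm]

theorem exists_sq_bounds_of_tendsto_div_sq {h : ℝ → ℝ} {a c : ℝ} (hc : 0 < c) (ha : h a = 0)
    (hlim : Tendsto (fun t => h t / (t - a) ^ 2) (𝓝[≠] a) (𝓝 c))
    {κ : ℝ} (hκ0 : 0 < κ) (hκ1 : κ < 1) :
    ∃ ρ > 0, ∀ t, |t - a| ≤ ρ → κ * c * (t - a) ^ 2 ≤ h t ∧ h t ≤ c * (t - a) ^ 2 / κ := by
  have hev : ∀ᶠ t in 𝓝[≠] a, h t / (t - a) ^ 2 ∈ Ioo (κ * c) (c / κ) :=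
    hlim (Ioo_mem_nhds (by nlinarith) ((lt_div_iff₀ hκ0).2 (by nlinarith)))
  obtain ⟨ε, hε, hball⟩ := Metric.eventually_nhds_iff_ball.1 (eventually_nhdsWithin_iff.1 hev)
  refine ⟨ε / 2, half_pos hε, fun t ht => ?_⟩
  rcases eq_or_ne t a with rfl | hta
  · simp [ha]
  have hpos : 0 < (t - a) ^ 2 := by positivity [sub_ne_zero.2 hta]
  obtain ⟨hlo, hhi⟩ := hball t (by rw [Metric.mem_ball, Real.dist_eq]; linarith) hta
  rw [lt_div_iff₀ hpos] at hlo
  rw [div_lt_iff₀ hpos] at hhi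
  refine ⟨by linarith, ?_⟩
  rw [le_div_iff₀ hκ0]
  calc h t * κ ≤ c / κ * (t - a) ^ 2 * κ := by gcongr
    _ = c * (t - a) ^ 2 := by field_simp

def QuadraticSandwich (f : ℝ → ℝ) (d c κ ρ : ℝ) : Prop :=
  ∀ t, |t - 1| ≤ ρ →
    κ * c * (t - 1) ^ 2 ≤ f t - d * (t - 1) ∧ f t - d * (t - 1) ≤ c * (t - 1) ^ 2 / κ

theorem exists_quadraticSandwich {f : ℝ → ℝ} (hf1 : f 1 = 0) (hd1 : DifferentiableAt ℝ f 1)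
    (hd2 : DifferentiableAt ℝ (deriv f) 1) (hf2 : 0 < deriv (deriv f) 1) {κ : ℝ}
    (hκ : κ ∈ Ioo 0 1) : ∃ ρ > 0, QuadraticSandwich f (deriv f 1) (deriv (deriv f) 1 / 2) κ ρ := by
  have hlim := tendsto_taylor_remainder_div_sq hd1 hd2
    (eventually_differentiableAt_of_deriv_deriv_ne_zero hd2 hf2.ne')
  simp only [hf1, sub_zero] at hlim
  exact exists_sq_bounds_of_tendsto_div_sq (half_pos hf2) (by simp [hf1]) hlim hκ.1 hκ.2

theorem ConvexOn.add_deriv_mul_sub_le {S : Set ℝ} {f : ℝ → ℝ} (hf : ConvexOn ℝ S f) {x y : ℝ}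
    (hx : x ∈ S) (hy : y ∈ S) (hd : DifferentiableAt ℝ f x) :
    f x + deriv f x * (y - x) ≤ f y := by
  rcases lt_trichotomy y x with hyx | rfl | hxy
  · have h := hf.slope_le_deriv hy hx hyx hd
    rw [slope_def_field, div_le_iff₀ (sub_pos.2 hyx)] at h
    linarith
  · simp
  · have h := hf.deriv_le_slope hx hy hxy hd
    rw [slope_def_field, le_div_iff₀ (sub_pos.2 hxy)] at h
    linarith

section Convex

variable {f : ℝ → ℝ} {d : ℝ}

theorem sub_tangent_le_of_le_one (hf : ConvexOn ℝ (Ioi 0) f) (hf1 : f 1 = 0)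
    (htan : ∀ t, 0 < t → d * (t - 1) ≤ f t) {t θ : ℝ} (ht : 0 < t) (hθ0 : 0 ≤ θ) (hθ1 : θ ≤ 1) :
    f (1 + θ * (t - 1)) - d * (θ * (t - 1)) ≤ f t - d * (t - 1) := by
  have hseg : f (1 + θ * (t - 1)) ≤ θ * f t := by
    have h := hf.2 (mem_Ioi.2 one_pos) (mem_Ioi.2 ht) (sub_nonneg.2 hθ1) hθ0 (by ring)
    simp only [smul_eq_mul, hf1, mul_zero, zero_add] at h
    rwa [show (1 - θ) * 1 + θ * t = 1 + θ * (t - 1) by ring] at h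
  nlinarith [mul_nonneg (sub_nonneg.2 hθ1) (sub_nonneg.2 (htan t ht))]

/-- Convexity propagates the quadratic lower bound near `1` to a uniform one away from `1`. -/
theorem exists_pos_le_sub_tangent (hf : ConvexOn ℝ (Ioi 0) f) (hf1 : f 1 = 0)
    (htan : ∀ t, 0 < t → d * (t - 1) ≤ f t) {a ρ₀ : ℝ} (ha : 0 < a) (hρ₀ : 0 < ρ₀)
    (hquad : ∀ t, |t - 1| ≤ ρ₀ → a * (t - 1) ^ 2 ≤ f t - d * (t - 1)) {ρ : ℝ} (hρ : 0 < ρ) :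
    ∃ m > 0, ∀ t, 0 < t → ρ ≤ |t - 1| → m + d * (t - 1) ≤ f t := by
  set r := min ρ ρ₀
  have hr : 0 < r := lt_min hρ hρ₀
  refine ⟨a * r ^ 2, by positivity, fun t ht htρ => ?_⟩
  have hdist : 0 < |t - 1| := hρ.trans_le htρ
  set θ := r / |t - 1|
  have hθr : |θ * (t - 1)| = r := by
    rw [abs_mul, abs_of_nonneg (by positivity), div_mul_cancel₀ _ hdist.ne']
  have hnear := hquad (1 + θ * (t - 1)) (by rw [add_sub_cancel_left, hθr]; exact min_le_right _ _)
  have hsq : (θ * (t - 1)) ^ 2 = r ^ 2 := by rw [← sq_abs, hθr]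
  rw [add_sub_cancel_left, hsq] at hnear
  have hmono := sub_tangent_le_of_le_one (θ := θ) hf hf1 htan ht (div_nonneg hr.le hdist.le)
    ((div_le_one hdist).2 ((min_le_left _ _).trans htρ))
  linarith

end Convex

theorem EReal.coe_finset_sum {ι : Type*} (s : Finset ι) (v : ι → ℝ) :
    ((∑ i ∈ s, v i : ℝ) : EReal) = ∑ i ∈ s, ((v i : ℝ) : EReal) :=
  map_sum (⟨⟨Real.toEReal, EReal.coe_zero⟩, EReal.coe_add⟩ : ℝ →+ EReal) v s

section Divergence

variable {𝒳 : Type*} [Fintype 𝒳] {f : ℝ → ℝ}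

noncomputable def fDiv (f : ℝ → ℝ) (R P : 𝒳 → ℝ) : ℝ :=
  ∑ x, P x * f (R x / P x)

theorem fDivE_eq_coe_fDiv {R P : 𝒳 → ℝ} (hP : ∀ x, 0 < P x) (hR : ∀ x, 0 < R x) :
    fDivE f R P = fDiv f R P := by
  rw [fDivE, fDiv, EReal.coe_finset_sum]
  exact Finset.sum_congr rfl fun x _ => by rw [if_neg (hP x).ne', if_neg (hR x).ne']

theorem pos_of_abs_div_sub_one_lt_one {a b : ℝ} (hb : 0 < b) (h : |a / b - 1| < 1) : 0 < a := by
  have : 0 < a / b := by linarith [(abs_lt.1 h).1]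
  exact (div_pos_iff_of_pos_right hb).1 this

theorem fDivE_eq_coe_fDiv_of_abs_le {R P : 𝒳 → ℝ} (hP : ∀ x, 0 < P x) {ρ : ℝ} (hρ1 : ρ < 1)
    (hdev : ∀ x, |R x / P x - 1| ≤ ρ) : fDivE f R P = fDiv f R P :=
  fDivE_eq_coe_fDiv hP fun x => pos_of_abs_div_sub_one_lt_one (hP x) ((hdev x).trans_lt hρ1)

theorem chiSq_eq_sum_mul_sq {R P : 𝒳 → ℝ} (hP : ∀ x, 0 < P x) :
    chiSq R P = ∑ x, P x * (R x / P x - 1) ^ 2 :=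
  Finset.sum_congr rfl fun x _ => by field_simp [(hP x).ne']

theorem chiSq_nonneg (R : 𝒳 → ℝ) {P : 𝒳 → ℝ} (hP : ∀ x, 0 ≤ P x) : 0 ≤ chiSq R P :=
  Finset.sum_nonneg fun x _ => div_nonneg (sq_nonneg _) (hP x)

theorem chiSq_pos_of_ne {R P : 𝒳 → ℝ} (hP : ∀ x, 0 < P x) (h : R ≠ P) : 0 < chiSq R P := by
  obtain ⟨x, hx⟩ := Function.ne_iff.1 h
  exact Finset.sum_pos' (fun x _ => div_nonneg (sq_nonneg _) (hP x).le)
    ⟨x, Finset.mem_univ x, div_pos (by positivity [sub_ne_zero.2 hx]) (hP x)⟩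

/-- Since `R` and `P` have the same mass, adding a linear term to `f` does not change `fDiv`. -/
theorem fDiv_eq_sum_sub_tangent (f : ℝ → ℝ) {R P : 𝒳 → ℝ} (hP : ∀ x, 0 < P x)
    (hR1 : ∑ x, R x = 1) (hP1 : ∑ x, P x = 1) (d : ℝ) :
    fDiv f R P = ∑ x, P x * (f (R x / P x) - d * (R x / P x - 1)) := by
  have hlin : ∑ x, P x * (d * (R x / P x - 1)) = 0 := by
    calc ∑ x, P x * (d * (R x / P x - 1)) = d * (∑ x, R x - ∑ x, P x) := by
          rw [← Finset.sum_sub_distrib, Finset.mul_sum]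
          exact Finset.sum_congr rfl fun x _ => by field_simp [(hP x).ne']
      _ = 0 := by rw [hR1, hP1, sub_self, mul_zero]
  calc fDiv f R P = fDiv f R P - ∑ x, P x * (d * (R x / P x - 1)) := by rw [hlin, sub_zero]
    _ = _ := by
      rw [fDiv, ← Finset.sum_sub_distrib]
      exact Finset.sum_congr rfl fun x _ => (mul_sub _ _ _).symm

theorem fDiv_mem_Icc_chiSq {R P : 𝒳 → ℝ} (hP : ∀ x, 0 < P x) (hR1 : ∑ x, R x = 1)
    (hP1 : ∑ x, P x = 1) {d c κ ρ : ℝ} (hquad : QuadraticSandwich f d c κ ρ)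
    (hdev : ∀ x, |R x / P x - 1| ≤ ρ) :
    fDiv f R P ∈ Icc (κ * c * chiSq R P) (c * chiSq R P / κ) := by
  rw [mem_Icc, fDiv_eq_sum_sub_tangent f hP hR1 hP1 d, chiSq_eq_sum_mul_sq hP, Finset.mul_sum,
    Finset.mul_sum, Finset.sum_div]
  constructor <;> refine Finset.sum_le_sum fun x _ => ?_
  · calc κ * c * (P x * (R x / P x - 1) ^ 2) = P x * (κ * c * (R x / P x - 1) ^ 2) := by ring
      _ ≤ _ := mul_le_mul_of_nonneg_left (hquad _ (hdev x)).1 (hP x).le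
  · calc _ ≤ P x * (c * (R x / P x - 1) ^ 2 / κ) :=
          mul_le_mul_of_nonneg_left (hquad _ (hdev x)).2 (hP x).le
      _ = _ := by ring

variable {d m ρ : ℝ}

theorem coe_sub_le_fZero (hρ1 : ρ < 1)
    (hfar : ∀ t, 0 < t → ρ ≤ |t - 1| → m + d * (t - 1) ≤ f t) :
    ((m - d : ℝ) : EReal) ≤ fZero f := by
  have hlim : Tendsto (fun t : ℝ => ((m + d * (t - 1) : ℝ) : EReal)) (𝓝[>] 0)
      (𝓝 ((m - d : ℝ) : EReal)) := by
    refine EReal.tendsto_coe.2 (Continuous.tendsto' ?_ 0 _ (by ring) |>.mono_left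
      nhdsWithin_le_nhds)
    fun_prop
  have hev : ∀ᶠ t in 𝓝[>] (0 : ℝ), ((m + d * (t - 1) : ℝ) : EReal) ≤ ((f t : ℝ) : EReal) := by
    filter_upwards [Ioc_mem_nhdsGT (lt_min one_pos (sub_pos.2 hρ1))] with t ⟨ht0, ht⟩
    refine EReal.coe_le_coe_iff.2 (hfar t ht0 ?_)
    rw [abs_of_nonpos (by linarith [min_le_left 1 (1 - ρ)])]
    linarith [min_le_right 1 (1 - ρ)]
  exact hlim.limsup_eq.symm.le.trans (limsup_le_limsup hev)

theorem coe_le_fDivE_summand (hρ1 : ρ < 1)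
    (hfar : ∀ t, 0 < t → ρ ≤ |t - 1| → m + d * (t - 1) ≤ f t) {r p : ℝ} (hp : 0 < p)
    (hr : 0 ≤ r) (hrp : ρ ≤ |r / p - 1|) :
    ((p * m + d * (r - p) : ℝ) : EReal) ≤
      if p = 0 then ((r : ℝ) : EReal) * fInftySlope f
      else if r = 0 then ((p : ℝ) : EReal) * fZero f
      else ((p * f (r / p) : ℝ) : EReal) := by
  rw [if_neg hp.ne']
  rcases hr.eq_or_lt with rfl | hr
  · rw [if_pos rfl, show p * m + d * (0 - p) = p * (m - d) by ring, EReal.coe_mul]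
    exact mul_le_mul_of_nonneg_left (coe_sub_le_fZero hρ1 hfar) (EReal.coe_nonneg.2 hp.le)
  · rw [if_neg hr.ne']
    refine EReal.coe_le_coe_iff.2 ?_
    calc p * m + d * (r - p) = p * (m + d * (r / p - 1)) := by field_simp
      _ ≤ p * f (r / p) := mul_le_mul_of_nonneg_left (hfar _ (div_pos hr hp) hrp) hp.le

/-- Coordinates other than `x₀` are bounded below by the tangent line, whose contributions sum
to `0`. -/
theorem coe_mul_le_fDivE_of_le_abs {R P : 𝒳 → ℝ} (hP : ∀ x, 0 < P x) (hP1 : ∑ x, P x = 1)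
    (hR : IsPmf R) (hρ1 : ρ < 1) (htan : ∀ t, 0 < t → d * (t - 1) ≤ f t)
    (hfar : ∀ t, 0 < t → ρ ≤ |t - 1| → m + d * (t - 1) ≤ f t) {x₀ : 𝒳}
    (hx₀ : ρ ≤ |R x₀ / P x₀ - 1|) : ((P x₀ * m : ℝ) : EReal) ≤ fDivE f R P := by
  classical
  have hsum : ∑ x, ((if x = x₀ then P x * m else 0) + d * (R x - P x)) = P x₀ * m := by
    rw [Finset.sum_add_distrib, Finset.sum_ite_eq', ← Finset.mul_sum, Finset.sum_sub_distrib,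
      hR.2, hP1]
    simp
  rw [← hsum, EReal.coe_finset_sum, fDivE]
  refine Finset.sum_le_sum fun x _ => ?_
  by_cases hx : x = x₀
  · rw [if_pos hx]
    subst hx
    exact coe_le_fDivE_summand hρ1 hfar (hP x) (hR.1 x) hx₀
  · have h := coe_le_fDivE_summand (m := 0) (ρ := 0) zero_lt_one
      (fun t ht _ => by simpa using htan t ht) (hP x) (hR.1 x) (abs_nonneg _)
    rw [if_neg hx]
    rwa [mul_zero] at h

theorem exists_forall_abs_div_sub_one_lt [Nonempty 𝒳] {P : 𝒳 → ℝ} (hP : ∀ x, 0 < P x)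
    (hP1 : ∑ x, P x = 1) (hm : 0 < m) (hρ1 : ρ < 1) (htan : ∀ t, 0 < t → d * (t - 1) ≤ f t)
    (hfar : ∀ t, 0 < t → ρ ≤ |t - 1| → m + d * (t - 1) ≤ f t) :
    ∃ δ₀ : ℝ, 0 < δ₀ ∧ ∀ R, IsPmf R → fDivE f R P ≤ δ₀ → ∀ x, |R x / P x - 1| < ρ := by
  obtain ⟨xm, hxm⟩ := Finite.exists_min P
  refine ⟨P xm * m / 2, by have := hP xm; positivity, fun R hR hle x => ?_⟩
  by_contra! hx
  have h := (coe_mul_le_fDivE_of_le_abs hP hP1 hR hρ1 htan hfar hx).trans hle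
  rw [EReal.coe_le_coe_iff] at h
  nlinarith [hxm x, hP xm]

end Divergence

section Channel

variable {𝒳 𝒴 : Type*} [Fintype 𝒳] {W : 𝒴 → 𝒳 → ℝ}

theorem isPmf_chanApply [Fintype 𝒴] (hW : IsChannel W) {R : 𝒳 → ℝ} (hR : IsPmf R) :
    IsPmf (chanApply W R) := by
  refine ⟨fun y => Finset.sum_nonneg fun x _ => mul_nonneg (hW.1 y x) (hR.1 x), ?_⟩
  simp only [chanApply]
  rw [Finset.sum_comm]
  simp [← Finset.sum_mul, hW.2, hR.2]

theorem chanApply_sub (W : 𝒴 → 𝒳 → ℝ) (R P : 𝒳 → ℝ) (y : 𝒴) :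
    chanApply W R y - chanApply W P y = ∑ x, W y x * (R x - P x) := by
  simp only [chanApply, ← Finset.sum_sub_distrib, mul_sub]

/-- The output likelihood ratio is a convex combination of input likelihood ratios. -/
theorem abs_chanApply_div_sub_one_le (hW : ∀ y x, 0 ≤ W y x) {R P : 𝒳 → ℝ}
    (hP : ∀ x, 0 < P x) {ρ : ℝ} (hdev : ∀ x, |R x / P x - 1| ≤ ρ) {y : 𝒴}
    (hy : 0 < chanApply W P y) : |chanApply W R y / chanApply W P y - 1| ≤ ρ := by
  have hdev' : ∀ x, |R x - P x| ≤ ρ * P x := fun x => by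
    have h := hdev x
    rwa [div_sub_one (hP x).ne', abs_div, abs_of_pos (hP x), div_le_iff₀ (hP x)] at h
  rw [div_sub_one hy.ne', abs_div, abs_of_pos hy, div_le_iff₀ hy, chanApply_sub]
  calc |∑ x, W y x * (R x - P x)| ≤ ∑ x, W y x * |R x - P x| := by
        refine (Finset.abs_sum_le_sum_abs _ _).trans_eq ?_
        simp only [abs_mul, abs_of_nonneg (hW y _)]
    _ ≤ ∑ x, W y x * (ρ * P x) :=
        Finset.sum_le_sum fun x _ => mul_le_mul_of_nonneg_left (hdev' x) (hW y x)
    _ = ρ * chanApply W P y := by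
        rw [chanApply, Finset.mul_sum]
        exact Finset.sum_congr rfl fun x _ => by ring

/-- Cauchy–Schwarz in each output coordinate. -/
theorem chiSq_chanApply_le [Fintype 𝒴] (hW : IsChannel W) {R P : 𝒳 → ℝ} (hP : ∀ x, 0 < P x) :
    chiSq (chanApply W R) (chanApply W P) ≤ chiSq R P := by
  have hq : ∀ y x, 0 ≤ W y x * ((R x - P x) ^ 2 / P x) := fun y x =>
    mul_nonneg (hW.1 y x) (div_nonneg (sq_nonneg _) (hP x).le)
  have hy : ∀ y, (chanApply W R y - chanApply W P y) ^ 2 / chanApply W P y ≤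
      ∑ x, W y x * ((R x - P x) ^ 2 / P x) := fun y => by
    refine div_le_of_le_mul₀ (Finset.sum_nonneg fun x _ => mul_nonneg (hW.1 y x) (hP x).le)
      (Finset.sum_nonneg fun x _ => hq y x) ?_
    rw [chanApply_sub, mul_comm]
    refine Finset.sum_sq_le_sum_mul_sum_of_sq_le_mul _
      (fun x _ => mul_nonneg (hW.1 y x) (hP x).le) (fun x _ => hq y x) fun x _ => le_of_eq ?_
    field_simp [(hP x).ne']
  calc chiSq (chanApply W R) (chanApply W P) ≤ ∑ y, ∑ x, W y x * ((R x - P x) ^ 2 / P x) :=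
        Finset.sum_le_sum fun y _ => hy y
    _ = chiSq R P := by
        rw [Finset.sum_comm]
        simp [← Finset.sum_mul, hW.2, chiSq]

theorem chanApply_add_smul_sub (W : 𝒴 → 𝒳 → ℝ) (P R : 𝒳 → ℝ) (s : ℝ) :
    chanApply W (P + s • (R - P)) = chanApply W P + s • (chanApply W R - chanApply W P) := by
  funext y
  simp only [chanApply, Pi.add_apply, Pi.smul_apply, Pi.sub_apply, smul_eq_mul, Finset.mul_sum,
    ← Finset.sum_sub_distrib, ← Finset.sum_add_distrib]
  exact Finset.sum_congr rfl fun x _ => by ring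

end Channel

section Mixture

variable {𝒳 : Type*} {P R : 𝒳 → ℝ} {s : ℝ}

theorem IsPmf.add_smul_sub [Fintype 𝒳] (hP : IsPmf P) (hR : IsPmf R) (hs0 : 0 ≤ s) (hs1 : s ≤ 1) :
    IsPmf (P + s • (R - P)) := by
  refine ⟨fun x => ?_, ?_⟩
  · have := hP.1 x; have := hR.1 x
    simp only [Pi.add_apply, Pi.smul_apply, Pi.sub_apply, smul_eq_mul]
    nlinarith
  · simp only [Pi.add_apply, Pi.smul_apply, Pi.sub_apply, smul_eq_mul, Finset.sum_add_distrib,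
      ← Finset.mul_sum, Finset.sum_sub_distrib, hP.2, hR.2, sub_self, mul_zero, add_zero]

theorem chiSq_add_smul_sub [Fintype 𝒳] (P R : 𝒳 → ℝ) (s : ℝ) :
    chiSq (P + s • (R - P)) P = s ^ 2 * chiSq R P := by
  simp only [chiSq, Finset.mul_sum, Pi.add_apply, Pi.smul_apply, Pi.sub_apply, smul_eq_mul]
  exact Finset.sum_congr rfl fun x _ => by ring

theorem add_smul_sub_div_sub_one (hP : ∀ x, 0 < P x) (x : 𝒳) :
    (P + s • (R - P)) x / P x - 1 = s * (R x / P x - 1) := by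
  simp only [Pi.add_apply, Pi.smul_apply, Pi.sub_apply, smul_eq_mul]
  field_simp [(hP x).ne']
  ring

end Mixture

section Ratio

variable {𝒳 𝒴 : Type*} [Fintype 𝒳] [Fintype 𝒴] {f : ℝ → ℝ} {W : 𝒴 → 𝒳 → ℝ} {P : 𝒳 → ℝ}
  {d c κ ρ : ℝ}

def chiSqRatios (P : 𝒳 → ℝ) (W : 𝒴 → 𝒳 → ℝ) : Set ℝ :=
  {r | ∃ R : 𝒳 → ℝ, IsPmf R ∧ 0 < chiSq R P ∧
    r = chiSq (chanApply W R) (chanApply W P) / chiSq R P}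

def fDivRatios (f : ℝ → ℝ) (P : 𝒳 → ℝ) (W : 𝒴 → 𝒳 → ℝ) (δ : ℝ) : Set EReal :=
  {q | ∃ R : 𝒳 → ℝ, IsPmf R ∧ 0 < fDivE f R P ∧ fDivE f R P ≤ ((δ : ℝ) : EReal) ∧
    q = fDivE f (chanApply W R) (chanApply W P) / fDivE f R P}

theorem bddAbove_chiSqRatios (hW : IsChannel W) (hP : ∀ x, 0 < P x) :
    BddAbove (chiSqRatios P W) :=
  ⟨1, by rintro _ ⟨R, -, hχ, rfl⟩; exact (div_le_one hχ).2 (chiSq_chanApply_le hW hP)⟩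

theorem chiSqRatios_nonempty (hcard : 1 < Fintype.card 𝒳) (hP : ∀ x, 0 < P x) :
    (chiSqRatios P W).Nonempty := by
  classical
  obtain ⟨x₀, x₁, hne⟩ := Fintype.exists_pair_of_one_lt_card hcard
  refine ⟨_, fun x => if x = x₀ then 1 else 0, ⟨fun x => by positivity, by simp⟩,
    chiSq_pos_of_ne hP fun h => ?_, rfl⟩
  have h₁ := congrFun h x₁
  rw [if_neg hne.symm] at h₁
  exact (hP x₁).ne' h₁.symm

theorem fDiv_chanApply_div_fDiv_mem_Icc (hW : IsChannel W) (hP : IsPmf P) (hPpos : ∀ x, 0 < P x)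
    (hWP : ∀ y, 0 < chanApply W P y) (hc : 0 < c) (hκ : 0 < κ)
    (hquad : QuadraticSandwich f d c κ ρ) {R : 𝒳 → ℝ} (hR : IsPmf R)
    (hdev : ∀ x, |R x / P x - 1| ≤ ρ) (hχ : 0 < chiSq R P) :
    fDiv f (chanApply W R) (chanApply W P) / fDiv f R P ∈
      Icc (κ ^ 2 * (chiSq (chanApply W R) (chanApply W P) / chiSq R P))
        (chiSq (chanApply W R) (chanApply W P) / chiSq R P / κ ^ 2) := by
  obtain ⟨hin₁, hin₂⟩ := fDiv_mem_Icc_chiSq hPpos hR.2 hP.2 hquad hdev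
  obtain ⟨hout₁, hout₂⟩ := fDiv_mem_Icc_chiSq hWP (isPmf_chanApply hW hR).2
    (isPmf_chanApply hW hP).2 hquad fun y => abs_chanApply_div_sub_one_le hW.1 hPpos hdev (hWP y)
  have hχo := chiSq_nonneg (chanApply W R) fun y => (hWP y).le
  set χi := chiSq R P
  set χo := chiSq (chanApply W R) (chanApply W P)
  have hD : 0 < fDiv f R P := lt_of_lt_of_le (by positivity) hin₁
  constructor
  · rw [le_div_iff₀ hD]
    calc κ ^ 2 * (χo / χi) * fDiv f R P ≤ κ ^ 2 * (χo / χi) * (c * χi / κ) := by gcongr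
      _ = κ * c * χo := by field_simp
      _ ≤ _ := hout₁
  · rw [div_le_iff₀ hD]
    calc _ ≤ c * χo / κ := hout₂
      _ = χo / χi / κ ^ 2 * (κ * c * χi) := by field_simp
      _ ≤ _ := by gcongr

end Ratio

theorem tendsto_coe_sSup_of_sq_bounds {F : ℝ → EReal} {l : Filter ℝ} {S : Set ℝ}
    (hne : S.Nonempty)
    (hup : ∀ κ ∈ Ioo (0 : ℝ) 1, ∀ᶠ δ in l, F δ ≤ ((sSup S / κ ^ 2 : ℝ) : EReal))
    (hlow : ∀ κ ∈ Ioo (0 : ℝ) 1, ∀ r ∈ S, ∀ᶠ δ in l, ((κ ^ 2 * r : ℝ) : EReal) ≤ F δ) :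
    Tendsto F l (𝓝 ((sSup S : ℝ) : EReal)) := by
  have hsq : Tendsto (fun κ : ℝ => κ ^ 2) (𝓝[<] 1) (𝓝 1) := by
    simpa using ((continuous_pow 2).tendsto (1 : ℝ)).mono_left nhdsWithin_le_nhds
  have hIoo : ∀ᶠ κ in 𝓝[<] (1 : ℝ), κ ∈ Ioo 0 1 := Ioo_mem_nhdsLT one_pos
  rw [tendsto_order]
  constructor
  · intro a ha
    obtain ⟨b, hab, hb⟩ := EReal.exists_between_coe_real ha
    obtain ⟨r, hr, hbr⟩ := exists_lt_of_lt_csSup hne (EReal.coe_lt_coe_iff.1 hb)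
    obtain ⟨κ, hκ, hbκ⟩ := (hIoo.and ((hsq.mul_const r).eventually
      (lt_mem_nhds (by rwa [one_mul])))).exists
    filter_upwards [hlow κ hκ r hr] with δ hδ
    exact hab.trans ((EReal.coe_lt_coe_iff.2 hbκ).trans_le hδ)
  · intro a ha
    obtain ⟨b, hb, hba⟩ := EReal.exists_between_coe_real ha
    obtain ⟨κ, hκ, hκb⟩ := (hIoo.and ((tendsto_const_nhds.div hsq one_ne_zero).eventually
      (gt_mem_nhds (by rwa [div_one, ← EReal.coe_lt_coe_iff])))).exists
    filter_upwards [hup κ hκ] with δ hδ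
    exact hδ.trans_lt ((EReal.coe_lt_coe_iff.2 hκb).trans hba)

theorem exists_pos_mul_le_and_sq_mul_le {A B ρ δ : ℝ} (hρ : 0 < ρ) (hδ : 0 < δ) :
    ∃ s, 0 < s ∧ s ≤ 1 ∧ s * A ≤ ρ ∧ s ^ 2 * B ≤ δ := by
  have hA : ∀ᶠ s in 𝓝[>] (0 : ℝ), s * A < ρ :=
    (((continuous_mul_const A).tendsto' 0 0 (zero_mul A)).eventually (gt_mem_nhds hρ)).filter_mono
      nhdsWithin_le_nhds
  have hB : ∀ᶠ s in 𝓝[>] (0 : ℝ), s ^ 2 * B < δ :=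
    (((continuous_pow 2).mul continuous_const |>.tendsto' 0 0 (by simp)).eventually
      (gt_mem_nhds hδ)).filter_mono nhdsWithin_le_nhds
  have hI : ∀ᶠ s in 𝓝[>] (0 : ℝ), s ∈ Ioc 0 1 := Ioc_mem_nhdsGT one_pos
  obtain ⟨s, ⟨hs0, hs1⟩, hsA, hsB⟩ := (hI.and (hA.and hB)).exists
  exact ⟨s, hs0, hs1, hsA.le, hsB.le⟩

section Bounds

variable {𝒳 𝒴 : Type*} [Fintype 𝒳] [Fintype 𝒴] {f : ℝ → ℝ} {W : 𝒴 → 𝒳 → ℝ} {P : 𝒳 → ℝ}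
  {d c κ ρ : ℝ}

theorem eventually_sSup_fDivRatios_le [Nonempty 𝒳] (hconv : ConvexOn ℝ (Ioi 0) f)
    (hf1 : f 1 = 0) (htan : ∀ t, 0 < t → d * (t - 1) ≤ f t) (hc : 0 < c) (hκ : 0 < κ)
    (hρ : 0 < ρ) (hquad : QuadraticSandwich f d c κ ρ) (hW : IsChannel W) (hP : IsPmf P)
    (hPpos : ∀ x, 0 < P x) (hWP : ∀ y, 0 < chanApply W P y) :
    ∀ᶠ δ in 𝓝[>] 0, sSup (fDivRatios f P W δ) ≤ ((sSup (chiSqRatios P W) / κ ^ 2 : ℝ) : EReal) := by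
  set ρ' := min ρ (1 / 2)
  have hρ'1 : ρ' < 1 := (min_le_right _ _).trans_lt one_half_lt_one
  obtain ⟨m, hm, hfar⟩ := exists_pos_le_sub_tangent hconv hf1 htan (mul_pos hκ hc) hρ
    (fun t ht => (hquad t ht).1) (lt_min hρ one_half_pos)
  obtain ⟨δ₀, hδ₀, hnear⟩ := exists_forall_abs_div_sub_one_lt hPpos hP.2 hm hρ'1 htan hfar
  filter_upwards [Ioc_mem_nhdsGT hδ₀] with δ hδ
  refine sSup_le ?_
  rintro _ ⟨R, hR, hpos, hle, rfl⟩
  have hdev : ∀ x, |R x / P x - 1| ≤ ρ' := fun x =>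
    (hnear R hR (hle.trans (EReal.coe_le_coe_iff.2 hδ.2)) x).le
  have hdevρ : ∀ x, |R x / P x - 1| ≤ ρ := fun x => (hdev x).trans (min_le_left _ _)
  rw [fDivE_eq_coe_fDiv_of_abs_le hPpos hρ'1 hdev, EReal.coe_pos] at hpos
  rw [fDivE_eq_coe_fDiv_of_abs_le hPpos hρ'1 hdev, fDivE_eq_coe_fDiv_of_abs_le hWP hρ'1
    fun y => abs_chanApply_div_sub_one_le hW.1 hPpos hdev (hWP y), ← EReal.coe_div,
    EReal.coe_le_coe_iff]
  have hχ : 0 < chiSq R P := by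
    have h := hpos.trans_le (fDiv_mem_Icc_chiSq hPpos hR.2 hP.2 hquad hdevρ).2
    exact pos_of_mul_pos_right ((div_pos_iff_of_pos_right hκ).1 h) hc.le
  refine (fDiv_chanApply_div_fDiv_mem_Icc hW hP hPpos hWP hc hκ hquad hR hdevρ hχ).2.trans ?_
  gcongr
  exact le_csSup (bddAbove_chiSqRatios hW hPpos) ⟨R, hR, hχ, rfl⟩

/-- The witness is the mixture `P + s • (R - P)`: for small `s` it is close to `P`, and both
χ²-divergences scale by `s ^ 2`, so their ratio is unchanged. -/
theorem coe_mul_le_sSup_fDivRatios (hc : 0 < c) (hκ : 0 < κ) (hρ : 0 < ρ)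
    (hquad : QuadraticSandwich f d c κ ρ) (hW : IsChannel W) (hP : IsPmf P)
    (hPpos : ∀ x, 0 < P x) (hWP : ∀ y, 0 < chanApply W P y) {r : ℝ}
    (hr : r ∈ chiSqRatios P W) {δ : ℝ} (hδ : 0 < δ) :
    ((κ ^ 2 * r : ℝ) : EReal) ≤ sSup (fDivRatios f P W δ) := by
  obtain ⟨R, hR, hχ, rfl⟩ := hr
  set ρ' := min ρ (1 / 2)
  have hρ'1 : ρ' < 1 := (min_le_right _ _).trans_lt one_half_lt_one
  obtain ⟨s, hs0, hs1, hsM, hsδ⟩ := exists_pos_mul_le_and_sq_mul_le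
    (A := ∑ x, |R x / P x - 1|) (B := c * chiSq R P / κ) (lt_min hρ one_half_pos) hδ
  set Rs := P + s • (R - P)
  have hRs : IsPmf Rs := hP.add_smul_sub hR hs0.le hs1
  have hdev : ∀ x, |Rs x / P x - 1| ≤ ρ' := fun x => by
    rw [add_smul_sub_div_sub_one hPpos, abs_mul, abs_of_pos hs0]
    exact (mul_le_mul_of_nonneg_left (Finset.single_le_sum (fun x _ => abs_nonneg _)
      (Finset.mem_univ x)) hs0.le).trans hsM
  have hdevρ : ∀ x, |Rs x / P x - 1| ≤ ρ := fun x => (hdev x).trans (min_le_left _ _)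
  have hχs : chiSq Rs P = s ^ 2 * chiSq R P := chiSq_add_smul_sub P R s
  have hχo : chiSq (chanApply W Rs) (chanApply W P) =
      s ^ 2 * chiSq (chanApply W R) (chanApply W P) := by
    rw [chanApply_add_smul_sub, chiSq_add_smul_sub]
  have hχsPos : 0 < chiSq Rs P := by rw [hχs]; positivity
  obtain ⟨hin₁, hin₂⟩ := fDiv_mem_Icc_chiSq hPpos hRs.2 hP.2 hquad hdevρ
  have hin := fDivE_eq_coe_fDiv_of_abs_le (f := f) hPpos hρ'1 hdev
  have hout := fDivE_eq_coe_fDiv_of_abs_le (f := f) hWP hρ'1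
    fun y => abs_chanApply_div_sub_one_le hW.1 hPpos hdev (hWP y)
  refine le_sSup_of_le ⟨Rs, hRs, ?_, ?_, rfl⟩ ?_
  · rw [hin]
    exact EReal.coe_pos.2 (lt_of_lt_of_le (by positivity) hin₁)
  · rw [hin, EReal.coe_le_coe_iff]
    exact hin₂.trans (le_of_eq_of_le (by rw [hχs]; ring) hsδ)
  · rw [hin, hout, ← EReal.coe_div, EReal.coe_le_coe_iff]
    have h := (fDiv_chanApply_div_fDiv_mem_Icc hW hP hPpos hWP hc hκ hquad hRs hdevρ hχsPos).1
    rwa [hχs, hχo, mul_div_mul_left _ _ (by positivity)] at h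

end Bounds

theorem local_approximation_of_contraction_coefficients_general
    {𝒳 𝒴 : Type*} [Fintype 𝒳] [Fintype 𝒴]
    (hcardX : 2 ≤ Fintype.card 𝒳)
    (f : ℝ → ℝ)
    (hconv : ConvexOn ℝ (Set.Ioi (0 : ℝ)) f)
    (hf1 : f 1 = 0)
    (hd1 : DifferentiableAt ℝ f 1)
    (hd2 : DifferentiableAt ℝ (deriv f) 1)
    (hf2pos : 0 < deriv (deriv f) 1)
    (PX : 𝒳 → ℝ) (W : 𝒴 → 𝒳 → ℝ)
    (hPX : IsPmf PX) (hPXpos : ∀ x, 0 < PX x)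
    (hW : IsChannel W) (hPY : ∀ y, 0 < chanApply W PX y) :
    Filter.Tendsto
      (fun δ : ℝ => sSup {q : EReal | ∃ R : 𝒳 → ℝ, IsPmf R ∧
        0 < fDivE f R PX ∧ fDivE f R PX ≤ ((δ : ℝ) : EReal) ∧
        q = fDivE f (chanApply W R) (chanApply W PX) / fDivE f R PX})
      (nhdsWithin 0 (Set.Ioi (0 : ℝ)))
      (nhds ((etaChi PX W : ℝ) : EReal)) := by
  have : Nonempty 𝒳 := Fintype.card_pos_iff.1 (by omega)
  have hc : 0 < deriv (deriv f) 1 / 2 := half_pos hf2pos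
  have htan : ∀ t, 0 < t → deriv f 1 * (t - 1) ≤ f t := fun t ht => by
    simpa [hf1] using hconv.add_deriv_mul_sub_le (mem_Ioi.2 one_pos) (mem_Ioi.2 ht) hd1
  refine tendsto_coe_sSup_of_sq_bounds (chiSqRatios_nonempty hcardX hPXpos)
    (fun κ hκ => ?_) (fun κ hκ r hr => ?_)
  · obtain ⟨ρ, hρ, hquad⟩ := exists_quadraticSandwich hf1 hd1 hd2 hf2pos hκ
    exact eventually_sSup_fDivRatios_le hconv hf1 htan hc hκ.1 hρ hquad hW hPX hPXpos hPY
  · obtain ⟨ρ, hρ, hquad⟩ := exists_quadraticSandwich hf1 hd1 hd2 hf2pos hκ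
    filter_upwards [self_mem_nhdsWithin] with δ hδ
    exact coe_mul_le_sSup_fDivRatios hc hκ.1 hρ hquad hW hPX hPXpos hPY hr hδ

/-- **Theorem 1 (Local Approximation of Contraction Coefficients).**
`η_{χ²}(P_X,W) = lim_{δ→0⁺} sup { D_f(WR‖WP_X)/D_f(R‖P_X) : 0 < D_f(R‖P_X) ≤ δ }`. -/
theorem local_approximation_of_contraction_coefficients
    {𝒳 𝒴 : Type*} [Fintype 𝒳] [Fintype 𝒴]
    (hcardX : 2 ≤ Fintype.card 𝒳) (hcardY : 2 ≤ Fintype.card 𝒴)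
    (f : ℝ → ℝ)
    (hconv : ConvexOn ℝ (Set.Ioi (0 : ℝ)) f)
    (hstrict : StrictlyConvexAtOne f)
    (hf1 : f 1 = 0)
    (hd1 : DifferentiableAt ℝ f 1)
    (hd2 : DifferentiableAt ℝ (deriv f) 1)
    (hf2pos : 0 < deriv (deriv f) 1)
    (PX : 𝒳 → ℝ) (W : 𝒴 → 𝒳 → ℝ)
    (hPX : IsPmf PX) (hPXpos : ∀ x, 0 < PX x)
    (hW : IsChannel W) (hPY : ∀ y, 0 < chanApply W PX y) :
    Filter.Tendsto
      (fun δ : ℝ => sSup {q : EReal | ∃ R : 𝒳 → ℝ, IsPmf R ∧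
        0 < fDivE f R PX ∧ fDivE f R PX ≤ ((δ : ℝ) : EReal) ∧
        q = fDivE f (chanApply W R) (chanApply W PX) / fDivE f R PX})
      (nhdsWithin 0 (Set.Ioi (0 : ℝ)))
      (nhds ((etaChi PX W : ℝ) : EReal)) :=
  local_approximation_of_contraction_coefficients_general hcardX f hconv hf1 hd1 hd2 hf2pos PX W hPX
    hPXpos hW hPY
end

section
/- (KL divergence lower bound.) Let P be a pmf on 𝒳 with P(x)>0 for all x, and let R be a pmf on 𝒳 with R ≠ P. Let J(x)=R(x)−P(x). Then D(R||P) ≥ χ²(R||P) · ‖J‖₁ / ( 2 · max_{x∈𝒳} |J(x)/P(x)| ), where ‖J‖₁ = Σ_x |J(x)|. -/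
/-- KL divergence `D(R‖P) = ∑ₓ R(x) log(R(x)/P(x))`. -/
noncomputable def klDiv {𝒳 : Type*} [Fintype 𝒳] (R P : 𝒳 → ℝ) : ℝ :=
  ∑ x, R x * Real.log (R x / P x)

open Real Finset

/-! The χ² term is bounded termwise: `J²/P = |J/P|·|J| ≤ M·|J|` with `M = maxₓ |J(x)/P(x)|`, so
`χ²·‖J‖₁/(2M) ≤ ‖J‖₁²/2` and it suffices to prove Pinsker's inequality `‖J‖₁²/2 ≤ D(R‖P)`.
For that, `a log(a/b) - (a - b) ≥ 3(a - b)²/(2(a + 2b))` pointwise (the gap `pinskerGap` is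
convex with a critical point at `1`), and Cauchy–Schwarz with weights `R + 2P`, which sum to `3`,
gives `∑ 3J²/(2(R + 2P)) ≥ ‖J‖₁²/2`. -/

noncomputable def pinskerGap (t : ℝ) : ℝ :=
  t * log t - t + 1 - 3 * (t - 1) ^ 2 / (2 * (t + 2))

noncomputable def pinskerGap' (t : ℝ) : ℝ :=
  log t - 3 * (t - 1) * (t + 5) / (2 * (t + 2) ^ 2)

lemma hasDerivAt_pinskerGap {t : ℝ} (ht : 0 < t) : HasDerivAt pinskerGap (pinskerGap' t) t := by
  have h2 : 2 * (t + 2) ≠ 0 := by positivity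
  have h := (((hasDerivAt_mul_log ht.ne').sub (hasDerivAt_id t)).add_const 1).sub
    (((((hasDerivAt_id t).sub_const 1).pow 2).const_mul 3).div
      (((hasDerivAt_id t).add_const 2).const_mul 2) h2)
  refine h.congr_deriv ?_
  simp only [pinskerGap', id, Pi.pow_apply]
  field_simp
  ring

lemma hasDerivAt_pinskerGap' {t : ℝ} (ht : 0 < t) :
    HasDerivAt pinskerGap' (t⁻¹ - 27 / (t + 2) ^ 3) t := by
  have h2 : 2 * (t + 2) ^ 2 ≠ 0 := by positivity
  have h := (hasDerivAt_log ht.ne').sub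
    (((((hasDerivAt_id t).sub_const 1).const_mul 3).mul ((hasDerivAt_id t).add_const 5)).div
      ((((hasDerivAt_id t).add_const 2).pow 2).const_mul 2) h2)
  refine h.congr_deriv ?_
  simp only [id, Pi.pow_apply, Pi.mul_apply]
  have h3 : t + 2 ≠ 0 := by positivity
  field_simp
  ring

lemma convexOn_pinskerGap : ConvexOn ℝ (Set.Ici 0) pinskerGap := by
  have hcont : ContinuousOn pinskerGap (Set.Ici 0) := by
    refine (((continuous_mul_log.sub continuous_id).add continuous_const).continuousOn).sub ?_
    exact ContinuousOn.div (by fun_prop) (by fun_prop) fun t (ht : 0 ≤ t) ↦ by positivity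
  refine convexOn_of_hasDerivWithinAt2_nonneg (f' := pinskerGap')
    (f'' := fun t ↦ t⁻¹ - 27 / (t + 2) ^ 3) (convex_Ici 0) hcont
    (fun t ht ↦ ?_) (fun t ht ↦ ?_) (fun t ht ↦ ?_)
  all_goals rw [interior_Ici] at *
  · exact (hasDerivAt_pinskerGap ht).hasDerivWithinAt
  · exact (hasDerivAt_pinskerGap' ht).hasDerivWithinAt
  · have ht : 0 < t := ht
    -- `(t + 2)³ ≥ 27 t` is AM–GM for `1, 1, t`.
    have hamgm : 27 * t ≤ (t + 2) ^ 3 := by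
      nlinarith [mul_nonneg (sq_nonneg (t - 1)) (by linarith : (0 : ℝ) ≤ t + 8)]
    rw [sub_nonneg, div_le_iff₀ (by positivity), inv_mul_eq_div, le_div_iff₀ ht]
    linarith

lemma pinskerGap_nonneg {t : ℝ} (ht : 0 ≤ t) : 0 ≤ pinskerGap t := by
  have hmin : IsMinOn pinskerGap (Set.Ici 0) 1 := by
    refine convexOn_pinskerGap.isMinOn_of_rightDeriv_eq_zero (by simp) ?_
    rw [((hasDerivAt_pinskerGap one_pos).hasDerivWithinAt).derivWithin
      (uniqueDiffWithinAt_Ioi 1)]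
    norm_num [pinskerGap']
  simpa [pinskerGap] using hmin ht

lemma three_mul_sq_div_le_mul_log_div_sub {a b : ℝ} (ha : 0 ≤ a) (hb : 0 < b) :
    3 * (a - b) ^ 2 / (2 * (a + 2 * b)) ≤ a * log (a / b) - (a - b) := by
  have hgap := mul_nonneg hb.le (pinskerGap_nonneg (div_nonneg ha hb.le))
  have hab : 0 < a + 2 * b := by linarith
  have hscale : b * pinskerGap (a / b)
      = a * log (a / b) - (a - b) - 3 * (a - b) ^ 2 / (2 * (a + 2 * b)) := by
    unfold pinskerGap
    field_simp
    ring
  linarith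

section
variable {ι : Type*} [Fintype ι]

lemma klDiv_eq_sum_mul_log_div_sub {R P : ι → ℝ} (hsum : ∑ x, R x = ∑ x, P x) :
    klDiv R P = ∑ x, (R x * log (R x / P x) - (R x - P x)) := by
  rw [sum_sub_distrib, sum_sub_distrib, hsum, sub_self, sub_zero, klDiv]

theorem sq_sum_abs_sub_div_two_le_klDiv {R P : ι → ℝ} (hR : IsPmf R) (hP : IsPmf P)
    (hPpos : ∀ x, 0 < P x) :
    (∑ x, |R x - P x|) ^ 2 / 2 ≤ klDiv R P := by
  have hw : ∀ x ∈ univ, 0 < R x + 2 * P x := fun x _ ↦ by linarith [hR.1 x, hPpos x]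
  have hwsum : ∑ x, (R x + 2 * P x) = 3 := by
    rw [sum_add_distrib, ← mul_sum, hR.2, hP.2]
    norm_num
  have hcs := sq_sum_div_le_sum_sq_div univ (fun x ↦ |R x - P x|) hw
  simp only [hwsum, sq_abs] at hcs
  calc (∑ x, |R x - P x|) ^ 2 / 2
      ≤ 3 / 2 * ∑ x, (R x - P x) ^ 2 / (R x + 2 * P x) := by linarith
    _ = ∑ x, 3 * (R x - P x) ^ 2 / (2 * (R x + 2 * P x)) := by
        rw [mul_sum]
        refine sum_congr rfl fun x _ ↦ ?_
        field_simp
    _ ≤ ∑ x, (R x * log (R x / P x) - (R x - P x)) :=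
        sum_le_sum fun x _ ↦ three_mul_sq_div_le_mul_log_div_sub (hR.1 x) (hPpos x)
    _ = klDiv R P := (klDiv_eq_sum_mul_log_div_sub (hR.2.trans hP.2.symm)).symm

lemma chiSq_le_sup'_mul_sum_abs [Nonempty ι] (R : ι → ℝ) {P : ι → ℝ} (hP : ∀ x, 0 ≤ P x) :
    chiSq R P ≤
      univ.sup' univ_nonempty (fun x ↦ |(R x - P x) / P x|) * ∑ x, |R x - P x| := by
  rw [chiSq, mul_sum]
  refine sum_le_sum fun x hx ↦ ?_
  calc (R x - P x) ^ 2 / P x = |(R x - P x) / P x| * |R x - P x| := by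
        rw [abs_div, abs_of_nonneg (hP x), div_mul_eq_mul_div, ← sq, sq_abs]
    _ ≤ _ :=
        mul_le_mul_of_nonneg_right (le_sup' (fun x ↦ |(R x - P x) / P x|) hx) (abs_nonneg _)

end

theorem kl_divergence_lower_bound_general
    {𝒳 : Type*} [Fintype 𝒳] [Nonempty 𝒳]
    (P R : 𝒳 → ℝ) (hP : IsPmf P) (hPpos : ∀ x, 0 < P x)
    (hR : IsPmf R) :
    chiSq R P * (∑ x, |R x - P x|) /
        (2 * Finset.univ.sup' Finset.univ_nonempty (fun x => |(R x - P x) / P x|))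
      ≤ klDiv R P := by
  set M := univ.sup' univ_nonempty (fun x ↦ |(R x - P x) / P x|)
  set L := ∑ x, |R x - P x|
  have hM : 0 ≤ M :=
    (abs_nonneg _).trans (le_sup' (fun x ↦ |(R x - P x) / P x|) (mem_univ (Classical.arbitrary 𝒳)))
  have hL : 0 ≤ L := sum_nonneg fun x _ ↦ abs_nonneg _
  have hchi : chiSq R P ≤ M * L := chiSq_le_sup'_mul_sum_abs R hP.1
  -- `div_le_of_le_mul₀` needs only `0 ≤ 2 * M`: for `M = 0` the left side is `x / 0 = 0`.
  calc chiSq R P * L / (2 * M) ≤ L ^ 2 / 2 := div_le_of_le_mul₀ (by positivity) (by positivity)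
        (by linarith [mul_le_mul_of_nonneg_right hchi hL])
    _ ≤ klDiv R P := sq_sum_abs_sub_div_two_le_klDiv hR hP hPpos

/-- **Lemma 1 (KL Divergence Lower Bound).**
For distinct pmfs `P > 0` and `R`, with `J = R − P`,
`D(R‖P) ≥ χ²(R‖P) ⬝ ‖J‖₁ / (2 maxₓ |J(x)/P(x)|)`. -/
theorem kl_divergence_lower_bound
    {𝒳 : Type*} [Fintype 𝒳] [Nonempty 𝒳] (hcard : 2 ≤ Fintype.card 𝒳)
    (P R : 𝒳 → ℝ) (hP : IsPmf P) (hPpos : ∀ x, 0 < P x)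
    (hR : IsPmf R) (hne : R ≠ P) :
    chiSq R P * (∑ x, |R x - P x|) /
        (2 * Finset.univ.sup' Finset.univ_nonempty (fun x => |(R x - P x) / P x|))
      ≤ klDiv R P :=
  kl_divergence_lower_bound_general P R hP hPpos hR
end

section
/- (f-Divergence lower bound.) Let f:(0,∞)→ℝ be a convex function with f(1)=0 that is strictly convex at 1, thrice differentiable at 1 with f''(1)>0, and satisfies (f(t) − f'(1)(t−1))·(1 − (f'''(1)/(3f''(1)))(t−1)) ≥ (f''(1)/2)(t−1)² for every t∈(0,∞). Let P be a pmf on 𝒳 with P(x)>0 for all x, and let R be a pmf on 𝒳 with R ≠ P, and set J(x)=R(x)−P(x). Then D_f(R||P) ≥ (f''(1)/2) · χ²(R||P) · ‖J‖₁ / ( max_{x∈𝒳} |J(x)/P(x)| ), where ‖J‖₁ = Σ_x |J(x)|. -/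
/-!
Write `a = f''(1)`, `b = f'(1)`, `c = f'''(1)/(3a)` and `λ = R/P - 1`. The hypothesis on `f` says
exactly that `f` dominates `m(t) = b(t-1) + (a/2)(t-1)²/(1-c(t-1))`, a Padé approximant of `f`
at `1` agreeing with it to third order; tangent-line convexity makes the denominator positive.
Since `∑ P λ = 0`, `D_f(R‖P) ≥ ∑ P m(R/P) = (a/2) ∑ P λ²/(1-cλ)`, and the weights `P(1-cλ)` sum
to `1`, so Cauchy–Schwarz bounds this below by `(a/2) (∑ P|λ|)² = (a/2) ‖J‖₁²`. Finally
`χ² = ∑ |λ| |J| ≤ (max |λ|) ‖J‖₁`. Zeros of `R` are handled by passing to the limit `t → 0⁺` in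
`m ≤ f`; when `1 + c = 0` that limit forces `f(0) = ∞`, and then `D_f = ∞`.
-/

open Filter Topology Finset

namespace EReal

lemma coe_finset_sum_s13 {ι : Type*} (s : Finset ι) (g : ι → ℝ) :
    ((∑ i ∈ s, g i : ℝ) : EReal) = ∑ i ∈ s, (g i : EReal) :=
  map_sum (⟨⟨(↑), coe_zero⟩, coe_add⟩ : ℝ →+ EReal) g s

lemma finset_sum_eq_top {ι : Type*} {s : Finset ι} {g : ι → EReal} {i : ι} (hi : i ∈ s)
    (htop : g i = ⊤) (hbot : ∀ j ∈ s, g j ≠ ⊥) : ∑ j ∈ s, g j = ⊤ := by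
  classical
  rw [← add_sum_erase s g hi, htop]
  refine top_add_of_ne_bot (sum_induction g (· ≠ ⊥) (fun u v hu hv => ?_) (by simp)
    fun j hj => hbot j (mem_of_mem_erase hj))
  exact add_ne_bot_iff.2 ⟨hu, hv⟩

end EReal

lemma ConvexOn.deriv_mul_sub_le {S : Set ℝ} {f : ℝ → ℝ} {x y : ℝ} (hfc : ConvexOn ℝ S f)
    (hx : x ∈ S) (hy : y ∈ S) (hfd : DifferentiableAt ℝ f x) :
    deriv f x * (y - x) ≤ f y - f x := by
  rcases lt_trichotomy y x with hyx | rfl | hxy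
  · have h := hfc.slope_le_deriv hy hx hyx hfd
    rw [slope_def_field, div_le_iff₀ (sub_pos.2 hyx)] at h
    linarith
  · simp
  · have h := hfc.deriv_le_slope hx hy hxy hfd
    rwa [slope_def_field, le_div_iff₀ (sub_pos.2 hxy)] at h

lemma le_fZero_of_tendsto {f m : ℝ → ℝ} {L : EReal}
    (hm : Tendsto (fun t => (m t : EReal)) (𝓝[>] 0) (𝓝 L)) (hmf : ∀ᶠ t in 𝓝[>] 0, m t ≤ f t) :
    L ≤ fZero f := by
  rw [← hm.limsup_eq]
  exact limsup_le_limsup (hmf.mono fun t ht => EReal.coe_le_coe_iff.2 ht)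

section fDivE

variable {𝒳 : Type*} [Fintype 𝒳] {f : ℝ → ℝ} {P R : 𝒳 → ℝ}

lemma fDivE_eq_top (hP : ∀ x, 0 < P x) (hf : fZero f = ⊤) (hR : ∃ x, R x = 0) :
    fDivE f R P = ⊤ := by
  obtain ⟨x₀, hx₀⟩ := hR
  refine EReal.finset_sum_eq_top (mem_univ x₀) ?_ fun x _ => ?_
  · rw [if_neg (hP x₀).ne', if_pos hx₀, hf, EReal.coe_mul_top_of_pos (hP x₀)]
  · rw [if_neg (hP x).ne']
    split_ifs
    · rw [hf, EReal.coe_mul_top_of_pos (hP x)]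
      exact top_ne_bot
    · exact EReal.coe_ne_bot _

lemma coe_sum_le_fDivE {m : ℝ → ℝ} (hP : ∀ x, 0 < P x) (hR : ∀ x, 0 ≤ R x)
    (hmf : ∀ t, 0 < t → m t ≤ f t) (hm0 : ∀ x, R x = 0 → (m 0 : EReal) ≤ fZero f) :
    ((∑ x, P x * m (R x / P x) : ℝ) : EReal) ≤ fDivE f R P := by
  rw [EReal.coe_finset_sum_s13]
  refine sum_le_sum fun x _ => ?_
  rw [if_neg (hP x).ne']
  split_ifs with hx
  · rw [hx, zero_div]
    exact mul_le_mul_of_nonneg_left (hm0 x hx) (EReal.coe_nonneg.2 (hP x).le)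
  · have ht : 0 < R x / P x := div_pos ((hR x).lt_of_ne' hx) (hP x)
    exact_mod_cast mul_le_mul_of_nonneg_left (hmf _ ht) (hP x).le

end fDivE

noncomputable def padeMinorant (a b c t : ℝ) : ℝ :=
  b * (t - 1) + a / 2 * (t - 1) ^ 2 / (1 - c * (t - 1))

section padeMinorant

variable {f : ℝ → ℝ} {a b c : ℝ}

lemma padeDenom_pos (ha : 0 < a) (htan : ∀ t, 0 < t → b * (t - 1) ≤ f t)
    (hcond : ∀ t, 0 < t → a / 2 * (t - 1) ^ 2 ≤ (f t - b * (t - 1)) * (1 - c * (t - 1)))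
    {t : ℝ} (ht : 0 < t) : 0 < 1 - c * (t - 1) := by
  rcases eq_or_ne t 1 with rfl | ht1
  · simp
  have hsq : 0 < a / 2 * (t - 1) ^ 2 := by
    have := sub_ne_zero.2 ht1
    positivity
  exact pos_of_mul_pos_right (hsq.trans_le (hcond t ht)) (sub_nonneg.2 (htan t ht))

lemma neg_one_le_of_padeDenom_pos (hpos : ∀ t : ℝ, 0 < t → 0 < 1 - c * (t - 1)) : -1 ≤ c := by
  by_contra! hc
  have ht : 0 < 1 + 1 / c := by
    have : -1 < 1 / c := by rw [lt_div_iff_of_neg (by linarith)]; linarith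
    linarith
  have := hpos _ ht
  rw [add_sub_cancel_left, mul_one_div_cancel (by linarith), sub_self] at this
  exact this.false

lemma padeMinorant_le (ha : 0 < a) (htan : ∀ t, 0 < t → b * (t - 1) ≤ f t)
    (hcond : ∀ t, 0 < t → a / 2 * (t - 1) ^ 2 ≤ (f t - b * (t - 1)) * (1 - c * (t - 1)))
    {t : ℝ} (ht : 0 < t) : padeMinorant a b c t ≤ f t := by
  have hden := padeDenom_pos ha htan hcond ht
  have := (div_le_iff₀ hden).2 (hcond t ht)
  unfold padeMinorant
  linarith

lemma padeMinorant_zero_le_fZero (hmf : ∀ t, 0 < t → padeMinorant a b c t ≤ f t)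
    (hc : 0 < 1 + c) : (padeMinorant a b c 0 : EReal) ≤ fZero f := by
  have hcont : ContinuousAt (padeMinorant a b c) 0 := by
    unfold padeMinorant
    fun_prop (disch := (norm_num; linarith))
  exact le_fZero_of_tendsto (EReal.tendsto_coe.2 (hcont.tendsto.mono_left nhdsWithin_le_nhds))
    (eventually_mem_nhdsWithin.mono hmf)

lemma fZero_eq_top_of_padeMinorant_le (ha : 0 < a)
    (hmf : ∀ t, 0 < t → padeMinorant a b (-1) t ≤ f t) : fZero f = ⊤ := by
  have hlin : Tendsto (fun t : ℝ => b * (t - 1)) (𝓝[>] 0) (𝓝 (b * (0 - 1))) :=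
    ((by fun_prop : Continuous fun t : ℝ => b * (t - 1)).tendsto 0).mono_left nhdsWithin_le_nhds
  have hquad : Tendsto (fun t : ℝ => a / 2 * (t - 1) ^ 2) (𝓝[>] 0) (𝓝 (a / 2 * (0 - 1) ^ 2)) :=
    ((by fun_prop : Continuous fun t : ℝ => a / 2 * (t - 1) ^ 2).tendsto 0).mono_left
      nhdsWithin_le_nhds
  have hm : Tendsto (padeMinorant a b (-1)) (𝓝[>] 0) atTop := by
    refine (hlin.add_atTop (hquad.pos_mul_atTop (by positivity) tendsto_inv_nhdsGT_zero)).congr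
      fun t => ?_
    simp only [padeMinorant, div_eq_mul_inv]
    ring_nf
  exact top_le_iff.1 <|
    le_fZero_of_tendsto (EReal.tendsto_coe_nhds_top_iff.2 hm) (eventually_mem_nhdsWithin.mono hmf)

end padeMinorant

lemma sq_sum_mul_le_sum_mul_sq_div {ι : Type*} (s : Finset ι) {w u : ι → ℝ} (v : ι → ℝ)
    (hw : ∀ i ∈ s, 0 < w i) (hu : ∀ i ∈ s, 0 < u i) (hwu : ∑ i ∈ s, w i * u i = 1) :
    (∑ i ∈ s, w i * v i) ^ 2 ≤ ∑ i ∈ s, w i * v i ^ 2 / u i := by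
  have h := sq_sum_div_le_sum_sq_div s (fun i => w i * v i) fun i hi => mul_pos (hw i hi) (hu i hi)
  rw [hwu, div_one] at h
  refine h.trans_eq (sum_congr rfl fun i hi => ?_)
  field_simp [(hw i hi).ne']

lemma mul_div_sub_one_eq {p : ℝ} (r : ℝ) (hp : p ≠ 0) : p * (r / p - 1) = r - p := by
  field_simp

section chiSq

variable {𝒳 : Type*} [Fintype 𝒳] {P R : 𝒳 → ℝ}

lemma sum_mul_padeMinorant (a b c : ℝ) (hP : ∀ x, 0 < P x) (hPR : ∑ x, P x = ∑ x, R x) :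
    ∑ x, P x * padeMinorant a b c (R x / P x) =
      a / 2 * ∑ x, P x * (R x / P x - 1) ^ 2 / (1 - c * (R x / P x - 1)) := by
  have hlin : ∑ x, P x * (R x / P x - 1) = 0 := by
    simp only [fun x => mul_div_sub_one_eq (R x) (hP x).ne', sum_sub_distrib, hPR, sub_self]
  calc ∑ x, P x * padeMinorant a b c (R x / P x)
      = b * ∑ x, P x * (R x / P x - 1) +
          a / 2 * ∑ x, P x * (R x / P x - 1) ^ 2 / (1 - c * (R x / P x - 1)) := by
        rw [mul_sum, mul_sum, ← sum_add_distrib]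
        refine sum_congr rfl fun x _ => ?_
        rw [padeMinorant]
        ring
    _ = _ := by rw [hlin, mul_zero, zero_add]

lemma sq_sum_abs_sub_le_sum_mul_padeMinorant {a c : ℝ} (b : ℝ) (ha : 0 ≤ a)
    (hP : ∀ x, 0 < P x) (hP1 : ∑ x, P x = 1) (hR1 : ∑ x, R x = 1)
    (hden : ∀ x, 0 < 1 - c * (R x / P x - 1)) :
    a / 2 * (∑ x, |R x - P x|) ^ 2 ≤ ∑ x, P x * padeMinorant a b c (R x / P x) := by
  have hweights : ∑ x, P x * (1 - c * (R x / P x - 1)) = 1 := by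
    calc ∑ x, P x * (1 - c * (R x / P x - 1)) = ∑ x, P x - c * (∑ x, R x - ∑ x, P x) := by
          rw [← sum_sub_distrib, mul_sum, ← sum_sub_distrib]
          refine sum_congr rfl fun x _ => ?_
          rw [← mul_div_sub_one_eq (R x) (hP x).ne']
          ring
      _ = 1 := by rw [hP1, hR1]; ring
  have habs : ∀ x, P x * |R x / P x - 1| = |R x - P x| := fun x => by
    rw [← mul_div_sub_one_eq (R x) (hP x).ne', abs_mul, abs_of_pos (hP x)]
  have hcs := sq_sum_mul_le_sum_mul_sq_div univ (fun x => |R x / P x - 1|)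
    (fun x _ => hP x) (fun x _ => hden x) hweights
  simp only [habs, sq_abs] at hcs
  rw [sum_mul_padeMinorant a b c hP (hP1.trans hR1.symm)]
  exact mul_le_mul_of_nonneg_left hcs (by positivity)

lemma chiSq_le_sup_mul_sum_abs [Nonempty 𝒳] (hP : ∀ x, 0 < P x) :
    chiSq R P ≤ univ.sup' univ_nonempty (fun x => |(R x - P x) / P x|) * ∑ x, |R x - P x| := by
  rw [chiSq, mul_sum]
  refine sum_le_sum fun x _ => ?_
  have hx : (R x - P x) ^ 2 / P x = |(R x - P x) / P x| * |R x - P x| := by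
    rw [abs_div, abs_of_pos (hP x), div_mul_eq_mul_div, abs_mul_abs_self, sq]
  rw [hx]
  exact mul_le_mul_of_nonneg_right (le_sup' (fun x => |(R x - P x) / P x|) (mem_univ x))
    (abs_nonneg _)

lemma chiSq_mul_sum_abs_div_sup_le_sq [Nonempty 𝒳] (hP : ∀ x, 0 < P x) :
    chiSq R P * (∑ x, |R x - P x|) / univ.sup' univ_nonempty (fun x => |(R x - P x) / P x|) ≤
      (∑ x, |R x - P x|) ^ 2 := by
  have hM : 0 ≤ univ.sup' univ_nonempty (fun x => |(R x - P x) / P x|) :=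
    (abs_nonneg _).trans
      (le_sup' (fun x => |(R x - P x) / P x|) (mem_univ (Classical.arbitrary 𝒳)))
  have hs : 0 ≤ ∑ x, |R x - P x| := sum_nonneg fun x _ => abs_nonneg _
  refine div_le_of_le_mul₀ hM (by positivity) ?_
  calc chiSq R P * ∑ x, |R x - P x|
      ≤ univ.sup' univ_nonempty (fun x => |(R x - P x) / P x|) * (∑ x, |R x - P x|) *
          ∑ x, |R x - P x| := by gcongr; exact chiSq_le_sup_mul_sum_abs hP
    _ = _ := by ring

end chiSq

theorem f_divergence_lower_bound_general
    {𝒳 : Type*} [Fintype 𝒳] [Nonempty 𝒳]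
    (f : ℝ → ℝ)
    (hconv : ConvexOn ℝ (Set.Ioi (0 : ℝ)) f)
    (hf1 : f 1 = 0)
    (hd1 : DifferentiableAt ℝ f 1)
    (hf2pos : 0 < deriv (deriv f) 1)
    (hcond : ∀ t : ℝ, 0 < t →
      deriv (deriv f) 1 / 2 * (t - 1) ^ 2 ≤
        (f t - deriv f 1 * (t - 1)) *
          (1 - deriv (deriv (deriv f)) 1 / (3 * deriv (deriv f) 1) * (t - 1)))
    (P R : 𝒳 → ℝ) (hP : IsPmf P) (hPpos : ∀ x, 0 < P x)
    (hR : IsPmf R) :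
    ((deriv (deriv f) 1 / 2 * (chiSq R P * ∑ x, |R x - P x|) /
        (Finset.univ.sup' Finset.univ_nonempty (fun x => |(R x - P x) / P x|)) : ℝ) : EReal)
      ≤ fDivE f R P := by
  set a := deriv (deriv f) 1
  set b := deriv f 1
  set c := deriv (deriv (deriv f)) 1 / (3 * a)
  have htan : ∀ t, 0 < t → b * (t - 1) ≤ f t := fun t ht => by
    simpa [hf1] using hconv.deriv_mul_sub_le (Set.mem_Ioi.2 one_pos) ht hd1
  have hmf : ∀ t, 0 < t → padeMinorant a b c t ≤ f t := fun t =>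
    padeMinorant_le hf2pos htan hcond
  by_cases hdeg : c = -1 ∧ ∃ x, R x = 0
  · obtain ⟨hc_eq, hR0⟩ := hdeg
    rw [hc_eq] at hmf
    rw [fDivE_eq_top hPpos (fZero_eq_top_of_padeMinorant_le hf2pos hmf) hR0]
    exact le_top
  have hc_pos : ∀ x, R x = 0 → 0 < 1 + c := fun x hx => by
    have := (neg_one_le_of_padeDenom_pos fun t => padeDenom_pos hf2pos htan hcond).lt_of_ne'
      fun h => hdeg ⟨h, x, hx⟩
    linarith
  have hden : ∀ x, 0 < 1 - c * (R x / P x - 1) := fun x => by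
    rcases (hR.1 x).eq_or_lt' with hx | hx
    · simpa [hx, add_comm] using hc_pos x hx
    · exact padeDenom_pos hf2pos htan hcond (div_pos hx (hPpos x))
  calc _ ≤ ((a / 2 * (∑ x, |R x - P x|) ^ 2 : ℝ) : EReal) := by
        rw [mul_div_assoc, EReal.coe_le_coe_iff]
        exact mul_le_mul_of_nonneg_left (chiSq_mul_sum_abs_div_sup_le_sq hPpos) (by positivity)
    _ ≤ ((∑ x, P x * padeMinorant a b c (R x / P x) : ℝ) : EReal) :=
        EReal.coe_le_coe_iff.2
          (sq_sum_abs_sub_le_sum_mul_padeMinorant b hf2pos.le hPpos hP.2 hR.2 hden)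
    _ ≤ fDivE f R P :=
        coe_sum_le_fDivE hPpos hR.1 hmf fun x hx => padeMinorant_zero_le_fZero hmf (hc_pos x hx)

/-- **Lemma 5 (f-Divergence Lower Bound).**
`D_f(R‖P) ≥ (f''(1)/2) · χ²(R‖P) · ‖J‖₁ / maxₓ |J(x)/P(x)|` where `J = R − P`. -/
theorem f_divergence_lower_bound
    {𝒳 : Type*} [Fintype 𝒳] [Nonempty 𝒳] (hcard : 2 ≤ Fintype.card 𝒳)
    (f : ℝ → ℝ)
    (hconv : ConvexOn ℝ (Set.Ioi (0 : ℝ)) f)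
    (hstrict : StrictlyConvexAtOne f)
    (hf1 : f 1 = 0)
    (hd1 : DifferentiableAt ℝ f 1)
    (hd2 : DifferentiableAt ℝ (deriv f) 1)
    (hd3 : DifferentiableAt ℝ (deriv (deriv f)) 1)
    (hf2pos : 0 < deriv (deriv f) 1)
    (hcond : ∀ t : ℝ, 0 < t →
      deriv (deriv f) 1 / 2 * (t - 1) ^ 2 ≤
        (f t - deriv f 1 * (t - 1)) *
          (1 - deriv (deriv (deriv f)) 1 / (3 * deriv (deriv f) 1) * (t - 1)))
    (P R : 𝒳 → ℝ) (hP : IsPmf P) (hPpos : ∀ x, 0 < P x)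
    (hR : IsPmf R) (hne : R ≠ P) :
    ((deriv (deriv f) 1 / 2 * (chiSq R P * ∑ x, |R x - P x|) /
        (Finset.univ.sup' Finset.univ_nonempty (fun x => |(R x - P x) / P x|)) : ℝ) : EReal)
      ≤ fDivE f R P :=
  f_divergence_lower_bound_general f hconv hf1 hd1 hf2pos hcond P R hP hPpos hR
end

section
/- Let P be a pmf on 𝒳 with P(x)>0 for all x, where |𝒳|≥2. Then the supremum over all nonzero vectors J∈ℝ^𝒳 with Σ_x J(x)=0 of the quantity (max_{x∈𝒳} |J(x)/P(x)|) / ‖J‖₁ is attained and equals 1/(2·min_{x∈𝒳} P(x)), where ‖J‖₁ = Σ_x |J(x)|. -/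
/-!
If `∑ J = 0`, the mass of `J` at any point is cancelled by the rest, so `2 |J x| ≤ ‖J‖₁` and
hence `|J x| / P x ≤ ‖J‖₁ / (2 min P)`. Equality is reached by `J = δ_{x₀} - δ_y`, where `x₀`
minimises `P` and `y ≠ x₀`.
-/

open Finset

section ZeroSum

variable {ι : Type*} [Fintype ι]

theorem two_mul_abs_le_sum_abs_of_sum_eq_zero {J : ι → ℝ} (hJ : ∑ z, J z = 0) (x : ι) :
    2 * |J x| ≤ ∑ z, |J z| := by
  classical
  have hx : J x = -∑ z ∈ univ.erase x, J z := by
    rw [← add_sum_erase univ J (mem_univ x)] at hJ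
    linarith
  have hrest : |J x| ≤ ∑ z ∈ univ.erase x, |J z| := by
    rw [hx, abs_neg]
    exact abs_sum_le_sum_abs _ _
  have hsplit := add_sum_erase univ (fun z => |J z|) (mem_univ x)
  linarith

theorem sum_abs_pos_of_ne_zero {J : ι → ℝ} (hJ : J ≠ 0) : 0 < ∑ z, |J z| := by
  obtain ⟨x, hx⟩ := Function.ne_iff.mp hJ
  exact sum_pos' (fun z _ => abs_nonneg (J z)) ⟨x, mem_univ x, abs_pos.mpr hx⟩

theorem abs_div_le_sum_abs_div_of_sum_eq_zero {J P : ι → ℝ} {m : ℝ} (hJ : ∑ z, J z = 0)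
    (hm : 0 < m) (hmP : ∀ z, m ≤ P z) (x : ι) :
    |J x / P x| ≤ (∑ z, |J z|) / (2 * m) := by
  have hPx : 0 < P x := hm.trans_le (hmP x)
  rw [abs_div, abs_of_pos hPx, div_le_div_iff₀ hPx (by positivity)]
  calc |J x| * (2 * m) = 2 * |J x| * m := by ring
    _ ≤ (∑ z, |J z|) * P x :=
      mul_le_mul (two_mul_abs_le_sum_abs_of_sum_eq_zero hJ x) (hmP x) hm.le
        (sum_nonneg fun z _ => abs_nonneg (J z))

end ZeroSum

section Dipole

variable {ι : Type*} [DecidableEq ι] {x y : ι}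

theorem single_sub_single_apply_left (hxy : x ≠ y) :
    (Pi.single x 1 - Pi.single y 1 : ι → ℝ) x = 1 := by
  simp [hxy]

theorem single_sub_single_apply_right (hxy : x ≠ y) :
    (Pi.single x 1 - Pi.single y 1 : ι → ℝ) y = -1 := by
  simp [hxy.symm]

theorem single_sub_single_apply_of_ne {z : ι} (hzx : z ≠ x) (hzy : z ≠ y) :
    (Pi.single x 1 - Pi.single y 1 : ι → ℝ) z = 0 := by
  simp [hzx, hzy]

theorem sum_abs_single_sub_single [Fintype ι] (hxy : x ≠ y) :
    ∑ z, |(Pi.single x 1 - Pi.single y 1 : ι → ℝ) z| = 2 := by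
  have hrest : ∀ z, z ≠ x ∧ z ≠ y → |(Pi.single x 1 - Pi.single y 1 : ι → ℝ) z| = 0 :=
    fun z hz => by rw [single_sub_single_apply_of_ne hz.1 hz.2, abs_zero]
  rw [Fintype.sum_eq_add x y hxy hrest, single_sub_single_apply_left hxy,
    single_sub_single_apply_right hxy]
  norm_num

theorem sup'_abs_single_sub_single_div [Fintype ι] [Nonempty ι] {P : ι → ℝ} (hxy : x ≠ y)
    (hP : ∀ z, 0 < P z) (hx : ∀ z, P x ≤ P z) :
    univ.sup' univ_nonempty (fun z => |(Pi.single x 1 - Pi.single y 1 : ι → ℝ) z / P z|)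
      = 1 / P x := by
  refine le_antisymm (sup'_le _ _ fun z _ => ?_) (le_sup'_of_le _ (mem_univ x) ?_)
  · rcases eq_or_ne z x with rfl | hzx
    · rw [single_sub_single_apply_left hxy, abs_of_pos (one_div_pos.mpr (hP z))]
    rcases eq_or_ne z y with rfl | hzy
    · rw [single_sub_single_apply_right hxy, neg_div, abs_neg,
        abs_of_pos (one_div_pos.mpr (hP z))]
      exact one_div_le_one_div_of_le (hP x) (hx z)
    · rw [single_sub_single_apply_of_ne hzx hzy, zero_div, abs_zero]
      exact (one_div_pos.mpr (hP x)).le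
  · rw [single_sub_single_apply_left hxy, abs_of_pos (one_div_pos.mpr (hP x))]

end Dipole

theorem max_ratio_attained_general
    {𝒳 : Type*} [Fintype 𝒳] [Nonempty 𝒳] (hcard : 2 ≤ Fintype.card 𝒳)
    (P : 𝒳 → ℝ) (hPpos : ∀ x, 0 < P x) :
    IsGreatest
      {r : ℝ | ∃ J : 𝒳 → ℝ, J ≠ 0 ∧ (∑ x, J x) = 0 ∧
        r = (Finset.univ.sup' Finset.univ_nonempty (fun x => |J x / P x|)) /
              (∑ x, |J x|)}
      (1 / (2 * Finset.univ.inf' Finset.univ_nonempty P)) := by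
  classical
  obtain ⟨x₀, -, hx₀⟩ := exists_mem_eq_inf' univ_nonempty P
  have hmin : ∀ z, P x₀ ≤ P z := fun z => hx₀ ▸ inf'_le P (mem_univ z)
  rw [hx₀]
  obtain ⟨y, hy⟩ := Fintype.exists_ne_of_one_lt_card hcard x₀
  refine ⟨⟨Pi.single x₀ 1 - Pi.single y 1, ?_, ?_, ?_⟩, ?_⟩
  · exact Function.ne_iff.mpr ⟨x₀, by simp [single_sub_single_apply_left hy.symm]⟩
  · simp [sum_sub_distrib]
  · rw [sum_abs_single_sub_single hy.symm, sup'_abs_single_sub_single_div hy.symm hPpos hmin]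
    ring
  · rintro r ⟨J, hJ, hJsum, rfl⟩
    have hsup := sup'_le univ_nonempty _
      fun x _ => abs_div_le_sum_abs_div_of_sum_eq_zero hJsum (hPpos x₀) hmin x
    calc _ ≤ (∑ z, |J z|) / (2 * P x₀) / ∑ z, |J z| := by gcongr
      _ = 1 / (2 * P x₀) := by field_simp [(sum_abs_pos_of_ne_zero hJ).ne']

/-- The supremum over nonzero `J` with `∑ₓ J(x) = 0` of
`(maxₓ |J(x)/P(x)|) / ‖J‖₁` is attained and equals `1/(2 minₓ P(x))`. -/
theorem max_ratio_attained
    {𝒳 : Type*} [Fintype 𝒳] [Nonempty 𝒳] (hcard : 2 ≤ Fintype.card 𝒳)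
    (P : 𝒳 → ℝ) (hP : IsPmf P) (hPpos : ∀ x, 0 < P x) :
    IsGreatest
      {r : ℝ | ∃ J : 𝒳 → ℝ, J ≠ 0 ∧ (∑ x, J x) = 0 ∧
        r = (Finset.univ.sup' Finset.univ_nonempty (fun x => |J x / P x|)) /
              (∑ x, |J x|)}
      (1 / (2 * Finset.univ.inf' Finset.univ_nonempty P)) :=
  max_ratio_attained_general hcard P hPpos
end
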